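/- arXiv:1101.0774 — 4 statements merged into one kernel-verified Lean document; each statement's English description precedes it below -/
import Mathlib

section
/- For analytic polynomials f, p ∈ ℂ[z₁,…,zₙ] and 1 ≤ j ≤ n, the following identity holds on the Bergman space L²_a(𝔹ₙ): M*_{z_j} M_p f − M_p M*_{z_j} f = Σ_{k=0}^∞ (N+1+n)^{-(k+1)} [(M_{∂_j R^k p} − M*_{z_j} M_{R^{k+1} p}) f], where the series converges (e.g., it terminates on each monomial component). -/
/-!
Expanding `M_p f` and `M*_{z_j}` on monomials reduces the identity to one scalar identity per
pair of monomials `z^α` (from `p`) and `z^β` (from `f`). With `N = n + |α| + |β|` and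
`A = |α|`, the `k`-th term of the series is a geometric term in `A / N < 1`, and summing it gives
`(α_j + β_j) / N - β_j / (N - A)`, the coefficient of `z^(α + β - e_j)` on the left-hand side.
-/

open Function

theorem hasSum_one_div_pow_succ_mul_sub {N A p q : ℝ} (hA : 0 ≤ A) (hAN : A < N) :
    HasSum (fun k : ℕ => 1 / N ^ (k + 1) * (A ^ k * p - A ^ (k + 1) * q / N))
      (q / N - (q - p) / (N - A)) := by
  have hN : 0 < N := hA.trans_lt hAN
  have hNA : N - A ≠ 0 := sub_ne_zero.2 hAN.ne'
  have hgeom := (hasSum_geometric_of_lt_one (div_nonneg hA hN.le)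
    ((div_lt_one hN).2 hAN)).mul_left (p / N - A * q / N ^ 2)
  have hsum : q / N - (q - p) / (N - A) = (p / N - A * q / N ^ 2) * (1 - A / N)⁻¹ := by
    rw [one_sub_div hN.ne', inv_div]
    field_simp
    ring
  refine hsum ▸ hgeom.congr_fun fun k => ?_
  rw [div_pow]
  field_simp
  ring

theorem finsum_finsum_eq_sum_sum {ι κ R M : Type*} [Zero R] [AddCommMonoid M]
    {a : ι → R} {b : κ → R} (ha : (support a).Finite) (hb : (support b).Finite)
    (f : ι → κ → M) (hf : ∀ x y, a x = 0 ∨ b y = 0 → f x y = 0) :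
    ∑ᶠ x, ∑ᶠ y, f x y = ∑ x ∈ ha.toFinset, ∑ y ∈ hb.toFinset, f x y := by
  have mem_of_ne_zero : ∀ x y, f x y ≠ 0 → x ∈ ha.toFinset ∧ y ∈ hb.toFinset := by
    intro x y hxy
    by_contra h
    simp only [not_and_or, Set.Finite.mem_toFinset, mem_support, not_not] at h
    exact hxy (hf x y h)
  rw [finsum_congr fun x => finsum_eq_sum_of_support_subset (f x)
    fun y hy => (mem_of_ne_zero x y hy).2]
  refine finsum_eq_sum_of_support_subset _ fun x hx => ?_
  obtain ⟨y, -, hy⟩ := Finset.exists_ne_zero_of_sum_ne_zero hx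
  exact (mem_of_ne_zero x y hy).1

theorem prod_pow_mul_prod_pow_sub_ite {ι M : Type*} [Fintype ι] [DecidableEq ι] [CommMonoid M]
    (z : ι → M) (α β : ι → ℕ) {j : ι} (hj : β j ≠ 0) :
    (∏ i, z i ^ α i) * ∏ i, z i ^ (β i - if i = j then 1 else 0)
      = ∏ i, z i ^ (α i + β i - if i = j then 1 else 0) := by
  rw [← Finset.prod_mul_distrib]
  refine Finset.prod_congr rfl fun i _ => ?_
  rw [← pow_add]
  congr 1
  split_ifs with hij
  · subst hij
    omega
  · rfl

theorem commutator_radial_derivative_identity (n : ℕ) (hn : 0 < n)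
    (a b : (Fin n → ℕ) → ℂ)
    (ha : (Function.support a).Finite) (hb : (Function.support b).Finite)
    (j : Fin n) (z : Fin n → ℂ) :
    (∑ᶠ α : Fin n → ℕ, ∑ᶠ β : Fin n → ℕ, a α * b β *
          ((((α j + β j : ℕ) : ℝ) / (n + (∑ i, α i) + (∑ i, β i)) : ℝ) : ℂ) *
          ∏ i, z i ^ (α i + β i - if i = j then 1 else 0))
      - (∑ᶠ α : Fin n → ℕ, a α * ∏ i, z i ^ α i) *
          (∑ᶠ β : Fin n → ℕ, b β * ((((β j : ℕ) : ℝ) / (n + ∑ i, β i) : ℝ) : ℂ) *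
            ∏ i, z i ^ (β i - if i = j then 1 else 0))
      = ∑' k : ℕ, ∑ᶠ α : Fin n → ℕ, ∑ᶠ β : Fin n → ℕ, a α * b β *
          (((1 / (n + (∑ i, α i) + (∑ i, β i) : ℝ) ^ (k + 1)) *
            (((∑ i, α i : ℕ) : ℝ) ^ k * (α j : ℝ) -
              ((∑ i, α i : ℕ) : ℝ) ^ (k + 1) * ((α j + β j : ℕ) : ℝ) /
                (n + (∑ i, α i) + (∑ i, β i)))) : ℝ) *
          ∏ i, z i ^ (α i + β i - if i = j then 1 else 0) := by
  classical
  have hlt : ∀ α β : Fin n → ℕ, ((∑ i, α i : ℕ) : ℝ) < n + (∑ i, α i) + (∑ i, β i) :=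
    fun α β => by linarith [(Nat.cast_pos (α := ℝ)).2 hn, Nat.cast_nonneg (α := ℝ) (∑ i, β i)]
  rw [finsum_finsum_eq_sum_sum ha hb _ fun α β h => by rcases h with h | h <;> simp [h],
    finsum_eq_sum_of_support_subset _ ((support_mul_subset_left _ _).trans ha.coe_toFinset.superset),
    finsum_eq_sum_of_support_subset _ (((support_mul_subset_left _ _).trans
      (support_mul_subset_left _ _)).trans hb.coe_toFinset.superset),
    Finset.sum_mul_sum, ← Finset.sum_sub_distrib]
  rw [tsum_congr fun k => finsum_finsum_eq_sum_sum ha hb _ fun α β h => by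
      rcases h with h | h <;> simp [h],
    (hasSum_sum fun α _ => hasSum_sum fun β _ =>
      ((Complex.hasSum_ofReal.2 (hasSum_one_div_pow_succ_mul_sub (p := (α j : ℝ))
        (q := ((α j + β j : ℕ) : ℝ)) (Nat.cast_nonneg _) (hlt α β))).mul_left (a α * b β)).mul_right
          (∏ i, z i ^ (α i + β i - if i = j then 1 else 0))).tsum_eq]
  refine Finset.sum_congr rfl fun α _ => ?_
  rw [← Finset.sum_sub_distrib]
  refine Finset.sum_congr rfl fun β _ => ?_
  -- For `β j = 0` the exponent `β j - 1` truncates, but its coefficient `β j / (n + |β|)` vanishes.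
  rcases eq_or_ne (β j) 0 with hβ | hβ
  · simp [hβ]
  · rw [← prod_pow_mul_prod_pow_sub_ite z α β hβ]
    push_cast
    ring
end

section
/- For every non-negative integer t and every analytic function f on 𝔹ₙ with ∫_{𝔹ₙ} |f|² (1−|z|²)^t dm < ∞, one has ∫_{𝔹ₙ} |f(z)|² (1−|z|²)^t dm(z) ≤ 3^{t+1} ∫_{|z|>1/2} |f(z)|² (1−|z|²)^t dm(z), where dm is Lebesgue measure on 𝔹ₙ ⊂ ℂⁿ. -/
/-!
Restricting `f` to the complex line through `z` and combining the Cauchy integral formula on the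
circle of radius `L > 1` with Cauchy–Schwarz gives `‖f z‖² ≤ L² / (L² - 1)` times the mean of
`‖f‖²` over the circle `{e^{iθ} L z}`. Averaging over `z` in the ball of radius `1/2` and undoing
the dilations `z ↦ e^{iθ} L z`, whose real Jacobian is `L^{2n}`, bounds the mass of `‖f‖²` on that
ball by `L² / (L² - 1) · L^{-2n} ≤ 25/39` (for `L = 8/5`) times its mass on the ball of radius
`4/5`. Hence the inner ball carries at most twice the mass of the annulus `1/2 < |z| ≤ 4/5`, on
which the weight `(1 - |z|²)^t` is at least `3^{-t}`.
-/

open MeasureTheory Metric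

/-- Lebesgue measure on complex n-space with the Euclidean norm, given by the product measure. -/
noncomputable instance euclideanComplexMeasureSpace (n : ℕ) :
    MeasureTheory.MeasureSpace (EuclideanSpace ℂ (Fin n)) where
  toMeasurableSpace := WithLp.measurableSpace 2 (∀ _ : Fin n, ℂ)
  volume := Measure.map (WithLp.toLp 2) (volume : Measure (∀ _ : Fin n, ℂ))

instance euclideanComplexBorelSpace (n : ℕ) :
    BorelSpace (EuclideanSpace ℂ (Fin n)) :=
  PiLp.borelSpace 2

open Real Complex Module
open scoped Pointwise

instance euclideanComplexAddHaar (n : ℕ) :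
    Measure.IsAddHaarMeasure (volume : Measure (EuclideanSpace ℂ (Fin n))) :=
  (PiLp.continuousLinearEquiv 2 ℂ (fun _ : Fin n => ℂ)).symm.isAddHaarMeasure_map volume

theorem intervalIntegral.integral_mul_sq_le_sq_mul_sq {a b : ℝ} (hab : a ≤ b) {u v : ℝ → ℝ}
    (hu : IntervalIntegrable (fun x => u x ^ 2) volume a b)
    (hv : IntervalIntegrable (fun x => v x ^ 2) volume a b)
    (huv : IntervalIntegrable (fun x => u x * v x) volume a b) :
    (∫ x in a..b, u x * v x) ^ 2 ≤ (∫ x in a..b, u x ^ 2) * ∫ x in a..b, v x ^ 2 := by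
  have hquad : ∀ s : ℝ, 0 ≤ (∫ x in a..b, v x ^ 2) * (s * s)
      + (-2 * ∫ x in a..b, u x * v x) * s + ∫ x in a..b, u x ^ 2 := by
    intro s
    have hexpand : ∫ x in a..b, (u x - s * v x) ^ 2 = (∫ x in a..b, u x ^ 2)
        - 2 * s * (∫ x in a..b, u x * v x) + s ^ 2 * ∫ x in a..b, v x ^ 2 := by
      have hfun : (fun x => (u x - s * v x) ^ 2)
          = fun x => u x ^ 2 - 2 * s * (u x * v x) + s ^ 2 * v x ^ 2 := by
        funext x; ring
      rw [hfun, integral_add (hu.sub (huv.const_mul _)) (hv.const_mul _),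
        integral_sub hu (huv.const_mul _), integral_const_mul, integral_const_mul]
    have := integral_nonneg (μ := volume) hab fun x _ => sq_nonneg (u x - s * v x)
    linarith
  have := discrim_le_zero hquad
  unfold discrim at this
  linarith

theorem circleMap_sub_one_ne_zero {L : ℝ} (hL : 1 < L) (θ : ℝ) : circleMap 0 L θ - 1 ≠ 0 := by
  intro h
  have := congrArg norm (sub_eq_zero.1 h)
  rw [norm_circleMap_zero, norm_one, abs_of_pos (one_pos.trans hL)] at this
  exact hL.ne' this

theorem integral_inv_norm_circleMap_sub_one_sq {L : ℝ} (hL : 1 < L) :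
    ∫ θ in 0..2 * π, ‖circleMap 0 L θ - 1‖⁻¹ ^ 2 = 2 * π / (L ^ 2 - 1) := by
  have hL0 : 0 < L := one_pos.trans hL
  have hholo : DiffContOnCl ℂ (fun c : ℂ => ((L : ℂ) ^ 2 - c)⁻¹) (ball 0 L) := by
    refine DifferentiableOn.diffContOnCl ?_
    rw [closure_ball _ hL0.ne']
    refine ((differentiableOn_const _).sub differentiableOn_id).inv fun c hc => sub_ne_zero.2 ?_
    rintro rfl
    rw [mem_closedBall_zero_iff, norm_pow, Complex.norm_real, Real.norm_of_nonneg hL0.le] at hc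
    nlinarith
  have hcauchy := hholo.circleIntegral_sub_inv_smul (w := 1) (by simpa using hL)
  -- On the circle `|c| = L` we have `conj c = L² / c`, hence `‖c - 1‖⁻² = c / ((c - 1)(L² - c))`.
  have hintegrand : ∀ θ : ℝ, deriv (circleMap 0 L) θ • ((circleMap 0 L θ - 1)⁻¹ •
      ((L : ℂ) ^ 2 - circleMap 0 L θ)⁻¹) = I * ((‖circleMap 0 L θ - 1‖⁻¹ ^ 2 : ℝ) : ℂ) := by
    intro θ
    have hnorm : ‖circleMap 0 L θ‖ = L := by simp [abs_of_pos hL0]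
    have hc1 := circleMap_sub_one_ne_zero hL θ
    rw [deriv_circleMap]
    generalize circleMap 0 L θ = c at hnorm hc1 ⊢
    have hc0 : c ≠ 0 := by rintro rfl; simp at hnorm; linarith
    have hcL : (L : ℂ) ^ 2 - c ≠ 0 := by
      intro h
      rw [← sub_eq_zero.1 h, norm_pow, Complex.norm_real, Real.norm_of_nonneg hL0.le] at hnorm
      nlinarith
    have hsq : ((‖c - 1‖ ^ 2 : ℝ) : ℂ) = (c - 1) * ((L : ℂ) ^ 2 - c) / c := by
      have hconj : (starRingEnd ℂ) c = (L : ℂ) ^ 2 / c := by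
        rw [eq_div_iff hc0, mul_comm, Complex.mul_conj', hnorm]
      rw [Complex.ofReal_pow, ← Complex.mul_conj', map_sub, hconj, map_one]
      field_simp
    rw [inv_pow, Complex.ofReal_inv, hsq, smul_eq_mul, smul_eq_mul]
    field_simp
  rw [circleIntegral, intervalIntegral.integral_congr fun θ _ => hintegrand θ,
    intervalIntegral.integral_const_mul, intervalIntegral.integral_ofReal, smul_eq_mul] at hcauchy
  have hL1 : (L : ℂ) ^ 2 - 1 ≠ 0 := by exact_mod_cast (by nlinarith : L ^ 2 - 1 ≠ 0)
  apply Complex.ofReal_injective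
  push_cast
  field_simp at hcauchy ⊢
  linear_combination hcauchy

variable {F : Type*} [NormedAddCommGroup F] [NormedSpace ℂ F] [CompleteSpace F]

theorem DiffContOnCl.norm_sq_apply_one_le_circleAverage {g : ℂ → F} {L : ℝ}
    (hg : DiffContOnCl ℂ g (ball 0 L)) (hL : 1 < L) :
    ‖g 1‖ ^ 2 ≤ L ^ 2 / (L ^ 2 - 1) * Real.circleAverage (fun w => ‖g w‖ ^ 2) 0 L := by
  have hL0 : 0 < L := one_pos.trans hL
  have h2π : 0 < 2 * π := two_pi_pos
  set u : ℝ → ℝ := fun θ => ‖circleMap 0 L θ - 1‖⁻¹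
  set v : ℝ → ℝ := fun θ => ‖g (circleMap 0 L θ)‖
  have hu : Continuous u :=
    ((continuous_circleMap 0 L).sub continuous_const).norm.inv₀
      fun θ => norm_ne_zero_iff.2 (circleMap_sub_one_ne_zero hL θ)
  have hv : Continuous v := by
    refine (hg.continuousOn.comp_continuous (continuous_circleMap 0 L) fun θ => ?_).norm
    rw [closure_ball _ hL0.ne']
    exact circleMap_mem_closedBall 0 hL0.le θ
  have hcauchy : 2 * π * ‖g 1‖ ≤ L * ∫ θ in 0..2 * π, u θ * v θ := by
    have hformula := hg.circleIntegral_sub_inv_smul (w := 1) (by simpa using hL)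
    calc 2 * π * ‖g 1‖ = ‖∮ z in C(0, L), (z - 1)⁻¹ • g z‖ := by
          rw [hformula, norm_smul]; simp [abs_of_pos pi_pos]
      _ ≤ ∫ θ in 0..2 * π, ‖deriv (circleMap 0 L) θ • ((circleMap 0 L θ - 1)⁻¹ •
            g (circleMap 0 L θ))‖ :=
          intervalIntegral.norm_integral_le_integral_norm h2π.le
      _ = L * ∫ θ in 0..2 * π, u θ * v θ := by
          rw [← intervalIntegral.integral_const_mul]
          refine intervalIntegral.integral_congr fun θ _ => ?_
          simp [u, v, norm_smul, abs_of_pos hL0]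
  have hCS := intervalIntegral.integral_mul_sq_le_sq_mul_sq h2π.le
    ((hu.pow 2).intervalIntegrable _ _) ((hv.pow 2).intervalIntegrable _ _)
    ((hu.mul hv).intervalIntegrable _ _)
  rw [integral_inv_norm_circleMap_sub_one_sq hL] at hCS
  have hL1 : 0 < L ^ 2 - 1 := by nlinarith
  have hmain : 2 * π * (‖g 1‖ ^ 2 * (L ^ 2 - 1) * 2 * π)
      ≤ 2 * π * (L ^ 2 * ∫ θ in 0..2 * π, v θ ^ 2) :=
    calc 2 * π * (‖g 1‖ ^ 2 * (L ^ 2 - 1) * 2 * π) = (2 * π * ‖g 1‖) ^ 2 * (L ^ 2 - 1) := by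
          ring
      _ ≤ (L * ∫ θ in 0..2 * π, u θ * v θ) ^ 2 * (L ^ 2 - 1) := by gcongr
      _ ≤ L ^ 2 * (2 * π / (L ^ 2 - 1) * ∫ θ in 0..2 * π, v θ ^ 2) * (L ^ 2 - 1) := by
          rw [mul_pow]; gcongr
      _ = 2 * π * (L ^ 2 * ∫ θ in 0..2 * π, v θ ^ 2) := by field_simp
  rw [Real.circleAverage_def, smul_eq_mul, div_mul_eq_mul_div, le_div_iff₀ hL1]
  field_simp
  exact le_of_mul_le_mul_left hmain h2π

variable {E : Type*} [NormedAddCommGroup E] [NormedSpace ℂ E]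

theorem DifferentiableOn.norm_sq_le_circleAverage_smul {f : E → F}
    (hf : DifferentiableOn ℂ f (ball 0 1)) {L : ℝ} (hL : 1 < L) {z : E} (hz : L * ‖z‖ < 1) :
    ‖f z‖ ^ 2 ≤ L ^ 2 / (L ^ 2 - 1) * Real.circleAverage (fun w => ‖f (w • z)‖ ^ 2) 0 L := by
  have hslice : DiffContOnCl ℂ (fun w : ℂ => f (w • z)) (ball 0 L) := by
    refine DifferentiableOn.diffContOnCl ?_
    rw [closure_ball _ (one_pos.trans hL).ne']
    refine hf.comp (differentiable_id.smul_const z).differentiableOn fun w hw => ?_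
    rw [mem_closedBall_zero_iff] at hw
    rw [mem_ball_zero_iff, norm_smul]
    calc ‖w‖ * ‖z‖ ≤ L * ‖z‖ := by gcongr
      _ < 1 := hz
  simpa using hslice.norm_sq_apply_one_le_circleAverage hL

variable [FiniteDimensional ℂ E]

theorem LinearMap.det_restrictScalars_smul_id (c : ℂ) :
    ((c • LinearMap.id : E →ₗ[ℂ] E).restrictScalars ℝ).det = ‖c‖ ^ (2 * finrank ℂ E) := by
  rw [LinearMap.det_restrictScalars, LinearMap.det_smul, LinearMap.det_id, mul_one, map_pow,
    Algebra.norm_complex_apply, Complex.normSq_eq_norm_sq, pow_mul]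

variable [MeasurableSpace E] [BorelSpace E] (μ : Measure E) [μ.IsAddHaarMeasure]

theorem MeasureTheory.Measure.map_complex_smul_addHaar {c : ℂ} (hc : c ≠ 0) :
    Measure.map (c • ·) μ = ENNReal.ofReal (‖c‖ ^ (2 * finrank ℂ E))⁻¹ • μ := by
  have hdet := LinearMap.det_restrictScalars_smul_id (E := E) c
  have hmap := Measure.map_linearMap_addHaar_eq_smul_addHaar μ
    (f := (c • LinearMap.id : E →ₗ[ℂ] E).restrictScalars ℝ) (by rw [hdet]; positivity)
  rwa [hdet, abs_of_pos (by positivity)] at hmap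

theorem MeasureTheory.Measure.setIntegral_comp_complex_smul {G : Type*} [NormedAddCommGroup G]
    [NormedSpace ℝ G] (g : E → G) (s : Set E) {c : ℂ} (hc : c ≠ 0) :
    ∫ x in s, g (c • x) ∂μ = (‖c‖ ^ (2 * finrank ℂ E))⁻¹ • ∫ x in c • s, g x ∂μ := by
  have he : MeasurableEmbedding (c • · : E → E) :=
    (Homeomorph.smulOfNeZero c hc).measurableEmbedding
  rw [← ENNReal.toReal_ofReal (inv_nonneg.2 (by positivity : (0 : ℝ) ≤ ‖c‖ ^ (2 * finrank ℂ E))),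
    ← integral_smul_measure, ← Measure.restrict_smul, ← Measure.map_complex_smul_addHaar μ hc,
    he.setIntegral_map, Set.preimage_smul₀ hc, inv_smul_smul₀ hc]

theorem DifferentiableOn.setIntegral_closedBall_norm_sq_le {f : E → F}
    (hf : DifferentiableOn ℂ f (ball 0 1)) {L r : ℝ} (hL : 1 < L) (hLr : L * r < 1) :
    ∫ z in closedBall 0 r, ‖f z‖ ^ 2 ∂μ
      ≤ L ^ 2 / (L ^ 2 - 1) * (L ^ (2 * finrank ℂ E))⁻¹ *
        ∫ z in closedBall 0 (L * r), ‖f z‖ ^ 2 ∂μ := by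
  have hL0 : 0 < L := one_pos.trans hL
  have hz : ∀ z ∈ closedBall (0 : E) r, L * ‖z‖ < 1 := fun z hz =>
    calc L * ‖z‖ ≤ L * r := by gcongr; exact mem_closedBall_zero_iff.1 hz
      _ < 1 := hLr
  set Φ : ℝ → E → ℝ := fun θ z => ‖f (circleMap 0 L θ • z)‖ ^ 2
  have hΦ : Integrable (Function.uncurry Φ)
      ((volume.restrict (Set.uIoc 0 (2 * π))).prod (μ.restrict (closedBall 0 r))) := by
    rw [Measure.prod_restrict, ← IntegrableOn]
    refine IntegrableOn.mono_set ?_ (Set.prod_mono Set.uIoc_subset_uIcc le_rfl)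
    refine ContinuousOn.integrableOn_compact (isCompact_uIcc.prod (isCompact_closedBall _ _)) ?_
    have hcont : Continuous fun p : ℝ × E => circleMap 0 L p.1 • p.2 := by fun_prop
    refine (hf.continuousOn.comp hcont.continuousOn fun p hp => ?_).norm.pow 2
    rw [mem_ball_zero_iff, norm_smul, norm_circleMap_zero, abs_of_pos hL0]
    exact hz p.2 hp.2
  have hdilate : ∀ θ, ∫ z in closedBall 0 r, Φ θ z ∂μ
      = (L ^ (2 * finrank ℂ E))⁻¹ * ∫ z in closedBall 0 (L * r), ‖f z‖ ^ 2 ∂μ := by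
    intro θ
    have hc : circleMap 0 L θ ≠ 0 := circleMap_ne_center hL0.ne'
    rw [Measure.setIntegral_comp_complex_smul μ (fun z => ‖f z‖ ^ 2) _ hc, smul_closedBall' hc,
      smul_zero, norm_circleMap_zero, abs_of_pos hL0, smul_eq_mul]
  have hint : IntegrableOn (fun z => ‖f z‖ ^ 2) (closedBall 0 r) μ :=
    ContinuousOn.integrableOn_compact (isCompact_closedBall _ _)
      ((hf.continuousOn.mono (closedBall_subset_ball (by nlinarith))).norm.pow 2)
  have hint_avg : IntegrableOn
      (fun z => L ^ 2 / (L ^ 2 - 1) * Real.circleAverage (fun w => ‖f (w • z)‖ ^ 2) 0 L)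
      (closedBall 0 r) μ := by
    refine (hΦ.integral_prod_right.const_mul (L ^ 2 / (L ^ 2 - 1) * (2 * π)⁻¹)).congr
      (ae_of_all _ fun z => ?_)
    simp only [Real.circleAverage_def, smul_eq_mul,
      intervalIntegral.integral_of_le two_pi_pos.le, Set.uIoc_of_le two_pi_pos.le, mul_assoc]
    rfl
  calc ∫ z in closedBall 0 r, ‖f z‖ ^ 2 ∂μ
      ≤ ∫ z in closedBall 0 r,
          L ^ 2 / (L ^ 2 - 1) * Real.circleAverage (fun w => ‖f (w • z)‖ ^ 2) 0 L ∂μ :=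
        setIntegral_mono_on hint hint_avg measurableSet_closedBall
          fun z hz' => hf.norm_sq_le_circleAverage_smul hL (hz z hz')
    _ = L ^ 2 / (L ^ 2 - 1) * (2 * π)⁻¹ * ∫ θ in 0..2 * π, ∫ z in closedBall 0 r, Φ θ z ∂μ := by
        simp only [Real.circleAverage_def, smul_eq_mul, intervalIntegral_integral_swap hΦ]
        rw [integral_const_mul, integral_const_mul, mul_assoc]
    _ = L ^ 2 / (L ^ 2 - 1) * (L ^ (2 * finrank ℂ E))⁻¹ *
        ∫ z in closedBall 0 (L * r), ‖f z‖ ^ 2 ∂μ := by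
        simp only [hdilate, intervalIntegral.integral_const, smul_eq_mul, sub_zero]
        field_simp

theorem DifferentiableOn.setIntegral_closedBall_half_norm_sq_le_two_mul [Nontrivial E]
    {f : E → F} (hf : DifferentiableOn ℂ f (ball 0 1)) :
    ∫ z in closedBall 0 (1 / 2), ‖f z‖ ^ 2 ∂μ
      ≤ 2 * ∫ z in closedBall 0 (4 / 5) \ closedBall 0 (1 / 2), ‖f z‖ ^ 2 ∂μ := by
  have hint : IntegrableOn (fun z => ‖f z‖ ^ 2) (closedBall 0 (4 / 5)) μ :=
    ContinuousOn.integrableOn_compact (isCompact_closedBall _ _)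
      ((hf.continuousOn.mono (closedBall_subset_ball (by norm_num))).norm.pow 2)
  have hsplit := setIntegral_sdiff measurableSet_closedBall hint
    (closedBall_subset_closedBall (by norm_num : (1 / 2 : ℝ) ≤ 4 / 5))
  have hpow : ((8 / 5 : ℝ) ^ (2 * finrank ℂ E))⁻¹ ≤ 25 / 64 := by
    rw [inv_le_comm₀ (by positivity) (by norm_num)]
    calc (25 / 64 : ℝ)⁻¹ = (8 / 5) ^ 2 := by norm_num
      _ ≤ (8 / 5) ^ (2 * finrank ℂ E) :=
        pow_le_pow_right₀ (by norm_num) (by have := finrank_pos (R := ℂ) (M := E); omega)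
  have hnonneg : 0 ≤ ∫ z in closedBall 0 (8 / 5 * (1 / 2)), ‖f z‖ ^ 2 ∂μ :=
    setIntegral_nonneg measurableSet_closedBall fun z _ => by positivity
  have hinner : ∫ z in closedBall 0 (1 / 2), ‖f z‖ ^ 2 ∂μ
      ≤ 25 / 39 * ∫ z in closedBall 0 (4 / 5), ‖f z‖ ^ 2 ∂μ :=
    calc _ ≤ _ := hf.setIntegral_closedBall_norm_sq_le μ (L := 8 / 5) (r := 1 / 2)
          (by norm_num) (by norm_num)
      _ ≤ (8 / 5) ^ 2 / ((8 / 5) ^ 2 - 1) * (25 / 64) *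
          ∫ z in closedBall 0 (8 / 5 * (1 / 2)), ‖f z‖ ^ 2 ∂μ := by gcongr
      _ = 25 / 39 * ∫ z in closedBall 0 (4 / 5), ‖f z‖ ^ 2 ∂μ := by norm_num
  rw [hsplit]
  linarith

theorem DifferentiableOn.setIntegral_ball_weighted_norm_sq_le [Nontrivial E] {f : E → F}
    (hf : DifferentiableOn ℂ f (ball 0 1)) (t : ℕ)
    (hint : IntegrableOn (fun z => ‖f z‖ ^ 2 * (1 - ‖z‖ ^ 2) ^ t) (ball 0 1) μ) :
    ∫ z in ball 0 1, ‖f z‖ ^ 2 * (1 - ‖z‖ ^ 2) ^ t ∂μ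
      ≤ 3 ^ (t + 1) *
        ∫ z in ball 0 1 \ closedBall 0 (1 / 2), ‖f z‖ ^ 2 * (1 - ‖z‖ ^ 2) ^ t ∂μ := by
  set W : E → ℝ := fun z => ‖f z‖ ^ 2 * (1 - ‖z‖ ^ 2) ^ t
  set D : Set E := closedBall 0 (1 / 2)
  set A : Set E := closedBall 0 (4 / 5) \ D
  have hDB : D ⊆ ball 0 1 := closedBall_subset_ball (by norm_num)
  have hAB : A ⊆ ball 0 1 \ D :=
    Set.sdiff_subset_sdiff_left (closedBall_subset_ball (by norm_num))
  have hsq_int : ∀ s ⊆ closedBall (0 : E) (4 / 5), IntegrableOn (fun z => ‖f z‖ ^ 2) s μ :=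
    fun s hs => (ContinuousOn.integrableOn_compact (isCompact_closedBall _ _)
      ((hf.continuousOn.mono (closedBall_subset_ball (by norm_num))).norm.pow 2)).mono_set hs
  have hW_nonneg : ∀ z ∈ ball (0 : E) 1, 0 ≤ W z := by
    intro z hz
    rw [mem_ball_zero_iff] at hz
    have : 0 ≤ 1 - ‖z‖ ^ 2 := by nlinarith [norm_nonneg z]
    positivity
  have hinner : ∫ z in D, W z ∂μ ≤ ∫ z in D, ‖f z‖ ^ 2 ∂μ := by
    refine setIntegral_mono_on (hint.mono_set hDB)
      (hsq_int D (closedBall_subset_closedBall (by norm_num))) measurableSet_closedBall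
      fun z hz => ?_
    rw [mem_closedBall_zero_iff] at hz
    have h0 : 0 ≤ 1 - ‖z‖ ^ 2 := by nlinarith [norm_nonneg z]
    have h1 : (1 - ‖z‖ ^ 2) ^ t ≤ 1 := pow_le_one₀ h0 (by nlinarith [norm_nonneg z])
    calc ‖f z‖ ^ 2 * (1 - ‖z‖ ^ 2) ^ t ≤ ‖f z‖ ^ 2 * 1 := by gcongr
      _ = ‖f z‖ ^ 2 := mul_one _
  have hannulus : ∫ z in A, ‖f z‖ ^ 2 ∂μ ≤ 3 ^ t * ∫ z in A, W z ∂μ := by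
    rw [← integral_const_mul]
    refine setIntegral_mono_on (hsq_int A Set.sdiff_subset)
      ((hint.mono_set (hAB.trans Set.sdiff_subset)).const_mul _)
      (measurableSet_closedBall.diff measurableSet_closedBall) fun z hz => ?_
    have hz' := mem_closedBall_zero_iff.1 hz.1
    have h1 : 1 ≤ 3 ^ t * (1 - ‖z‖ ^ 2) ^ t := by
      rw [← mul_pow]
      exact one_le_pow₀ (by nlinarith [norm_nonneg z])
    calc ‖f z‖ ^ 2 = ‖f z‖ ^ 2 * 1 := (mul_one _).symm
      _ ≤ ‖f z‖ ^ 2 * (3 ^ t * (1 - ‖z‖ ^ 2) ^ t) := by gcongr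
      _ = 3 ^ t * W z := by ring
  have hmono : ∫ z in A, W z ∂μ ≤ ∫ z in ball 0 1 \ D, W z ∂μ :=
    setIntegral_mono_set (hint.mono_set Set.sdiff_subset)
      (ae_restrict_of_forall_mem (measurableSet_ball.diff measurableSet_closedBall)
        fun z hz => hW_nonneg z hz.1)
      hAB.eventuallyLE
  have houter_nonneg : 0 ≤ ∫ z in ball 0 1 \ D, W z ∂μ :=
    setIntegral_nonneg (measurableSet_ball.diff measurableSet_closedBall)
      fun z hz => hW_nonneg z hz.1
  calc ∫ z in ball 0 1, W z ∂μ = ∫ z in D, W z ∂μ + ∫ z in ball 0 1 \ D, W z ∂μ := by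
        rw [setIntegral_sdiff measurableSet_closedBall hint hDB]; ring
    _ ≤ 2 * (3 ^ t * ∫ z in ball 0 1 \ D, W z ∂μ) + ∫ z in ball 0 1 \ D, W z ∂μ := by
        gcongr
        calc ∫ z in D, W z ∂μ ≤ ∫ z in D, ‖f z‖ ^ 2 ∂μ := hinner
          _ ≤ 2 * ∫ z in A, ‖f z‖ ^ 2 ∂μ :=
            hf.setIntegral_closedBall_half_norm_sq_le_two_mul μ
          _ ≤ 2 * (3 ^ t * ∫ z in A, W z ∂μ) := by gcongr
          _ ≤ 2 * (3 ^ t * ∫ z in ball 0 1 \ D, W z ∂μ) := by gcongr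
    _ ≤ 3 ^ (t + 1) * ∫ z in ball 0 1 \ D, W z ∂μ := by
        have h3 : (1 : ℝ) ≤ 3 ^ t := one_le_pow₀ (by norm_num)
        rw [pow_succ]
        nlinarith

theorem weighted_mass_concentrated_near_boundary (n t : ℕ) (hn : 0 < n)
    (f : EuclideanSpace ℂ (Fin n) → ℂ)
    (hf : DifferentiableOn ℂ f (ball (0 : EuclideanSpace ℂ (Fin n)) 1))
    (hint : IntegrableOn (fun z => ‖f z‖ ^ 2 * (1 - ‖z‖ ^ 2) ^ t)
      (ball (0 : EuclideanSpace ℂ (Fin n)) 1)) :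
    ∫ z in ball (0 : EuclideanSpace ℂ (Fin n)) 1, ‖f z‖ ^ 2 * (1 - ‖z‖ ^ 2) ^ t
      ≤ 3 ^ (t + 1) *
        ∫ z in ball (0 : EuclideanSpace ℂ (Fin n)) 1 \ closedBall 0 (1 / 2),
          ‖f z‖ ^ 2 * (1 - ‖z‖ ^ 2) ^ t := by
  have : Nonempty (Fin n) := ⟨⟨0, hn⟩⟩
  exact hf.setIntegral_ball_weighted_norm_sq_le volume t hint
end

section
/- Let p be a one-variable polynomial of degree at most m, let 1 ≤ l ≤ m, and let f be an entire function on ℂ. Then |p^{(l)}(0) f(0)| ≤ (m!/(m−l)!) ∫_𝕋 |p f| dθ/(2π), where the integral is over the unit circle with normalized arc-length measure. -/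
/-!
Induction on `m`, proving the bound with `m.descFactorial l`, which equals `m! / (m - l)!` for
`l ≤ m` and vanishes for `l > m`, so that the statement holds for every `l`. The case `l = 0` is
the mean value property. Otherwise factor `p = q * (X - r)`, so that
`p⁽ᵏ⁺¹⁾(0) = (k + 1) q⁽ᵏ⁾(0) - r q⁽ᵏ⁺¹⁾(0)`, and replace `f` by `g = w f`, where `w` is entire with
`|w| = |z - r|` on the circle and `|w 0| = max 1 |r|` (take `w = z - r` if `|r| ≥ 1` and
`w = 1 - r̄ z` otherwise). Then `∫ |q g| = ∫ |p f|`, while `|g 0|` dominates both `|f 0|` and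
`|r f 0|`, so the induction hypothesis for `q` and `g` at orders `k` and `k + 1` gives the bound
with constant `(k + 1) (m-1)^{(k)} + (m-1)^{(k+1)} = m^{(k+1)}` (falling factorials).
-/

open Metric Polynomial Real

theorem Nat.succ_descFactorial_succ_eq_add (n k : ℕ) :
    (n + 1).descFactorial (k + 1) = n.descFactorial (k + 1) + (k + 1) * n.descFactorial k := by
  rw [succ_descFactorial_succ, descFactorial_succ, ← add_mul]
  rcases le_or_gt k n with _ | hnk
  · congr 1; omega
  · simp [descFactorial_eq_zero_iff_lt.mpr hnk]

theorem norm_circleAverage_le_circleAverage_norm {E : Type*} [NormedAddCommGroup E]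
    [NormedSpace ℝ E] (f : ℂ → E) (c : ℂ) (R : ℝ) :
    ‖circleAverage f c R‖ ≤ circleAverage (‖f ·‖) c R := by
  rw [circleAverage_def, circleAverage_def, norm_smul, smul_eq_mul, norm_inv,
    Real.norm_of_nonneg two_pi_pos.le]
  gcongr
  exact intervalIntegral.norm_integral_le_integral_norm two_pi_pos.le

theorem DiffContOnCl.norm_le_circleAverage_norm {E : Type*} [NormedAddCommGroup E]
    [NormedSpace ℂ E] [CompleteSpace E] {f : ℂ → E} {c : ℂ} {R : ℝ}
    (hf : DiffContOnCl ℂ f (ball c |R|)) : ‖f c‖ ≤ Real.circleAverage (‖f ·‖) c R :=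
  hf.circleAverage ▸ norm_circleAverage_le_circleAverage_norm f c R

theorem norm_eval_zero_mul_le_circleAverage (p : ℂ[X]) {f : ℂ → ℂ}
    (hf : DiffContOnCl ℂ f (ball 0 1)) :
    ‖p.eval 0 * f 0‖ ≤ circleAverage (fun z ↦ ‖p.eval z * f z‖) 0 1 := by
  have hpf : DiffContOnCl ℂ (fun z ↦ p.eval z * f z) (ball 0 |1|) := by
    rw [abs_one]; exact p.differentiable.diffContOnCl.smul hf
  simpa using hpf.norm_le_circleAverage_norm

theorem Polynomial.eval_zero_iterate_derivative_mul_X_sub_C {R : Type*} [CommRing R]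
    (q : R[X]) (r : R) (k : ℕ) :
    (derivative^[k + 1] (q * (X - C r))).eval 0
      = (k + 1) * (derivative^[k] q).eval 0 - r * (derivative^[k + 1] q).eval 0 := by
  rw [mul_sub, iterate_derivative_sub, iterate_derivative_mul_X, mul_comm q,
    iterate_derivative_C_mul]
  simp

theorem exists_differentiable_norm_eq_norm_sub_on_sphere (r : ℂ) :
    ∃ w : ℂ → ℂ, Differentiable ℂ w ∧ (∀ z ∈ sphere (0 : ℂ) 1, ‖w z‖ = ‖z - r‖) ∧
      ‖w 0‖ = max 1 ‖r‖ := by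
  rcases le_or_gt 1 ‖r‖ with hr | hr
  · exact ⟨(· - r), by fun_prop, fun _ _ ↦ rfl, by simp [hr]⟩
  · refine ⟨fun z ↦ 1 - starRingEnd ℂ r * z, by fun_prop, fun z hz ↦ ?_, by simp [hr.le]⟩
    rw [mem_sphere_zero_iff_norm] at hz
    have hzz : z * starRingEnd ℂ z = 1 := by
      rw [Complex.mul_conj, Complex.normSq_eq_norm_sq, hz]; norm_num
    calc ‖1 - starRingEnd ℂ r * z‖ = ‖z * starRingEnd ℂ (z - r)‖ := by
          rw [map_sub, mul_sub, hzz, mul_comm z]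
      _ = ‖z - r‖ := by rw [norm_mul, hz, one_mul, Complex.norm_conj]

theorem norm_iterate_derivative_mul_X_sub_C_eval_zero_mul_le {M : ℕ} {q : ℂ[X]}
    (ih : ∀ g : ℂ → ℂ, DiffContOnCl ℂ g (ball 0 1) → ∀ l, ‖(derivative^[l] q).eval 0 * g 0‖ ≤
      M.descFactorial l * circleAverage (fun z ↦ ‖q.eval z * g z‖) 0 1)
    (r : ℂ) {f : ℂ → ℂ} (hf : DiffContOnCl ℂ f (ball 0 1)) (k : ℕ) :
    ‖(derivative^[k + 1] (q * (X - C r))).eval 0 * f 0‖ ≤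
      (M + 1).descFactorial (k + 1) *
        circleAverage (fun z ↦ ‖(q * (X - C r)).eval z * f z‖) 0 1 := by
  obtain ⟨w, hw, hw_sphere, hw0⟩ := exists_differentiable_norm_eq_norm_sub_on_sphere r
  have havg : circleAverage (fun z ↦ ‖q.eval z * (w z * f z)‖) 0 1 =
      circleAverage (fun z ↦ ‖(q * (X - C r)).eval z * f z‖) 0 1 :=
    circleAverage_congr_sphere fun z hz ↦ by
      rw [abs_one] at hz
      simp only [eval_mul, eval_sub, eval_X, eval_C, norm_mul, hw_sphere z hz]
      ring
  have hg : DiffContOnCl ℂ (fun z ↦ w z * f z) (ball 0 1) := hw.diffContOnCl.smul hf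
  set avg := circleAverage (fun z ↦ ‖(q * (X - C r)).eval z * f z‖) 0 1
  set A := (derivative^[k + 1] q).eval 0
  set B := (derivative^[k] q).eval 0
  have hA : ‖A * (w 0 * f 0)‖ ≤ M.descFactorial (k + 1) * avg :=
    havg ▸ ih _ hg (k + 1)
  have hB : ‖B * (w 0 * f 0)‖ ≤ M.descFactorial k * avg :=
    havg ▸ ih _ hg k
  have hf0 : ‖B * f 0‖ ≤ ‖B * (w 0 * f 0)‖ := by
    rw [norm_mul, norm_mul, norm_mul, hw0]
    gcongr
    exact le_mul_of_one_le_left (norm_nonneg _) (le_max_left _ _)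
  have hrf0 : ‖A * (r * f 0)‖ ≤ ‖A * (w 0 * f 0)‖ := by
    rw [norm_mul, norm_mul, norm_mul, norm_mul, hw0]
    gcongr
    exact le_max_right _ _
  calc ‖(derivative^[k + 1] (q * (X - C r))).eval 0 * f 0‖
      = ‖((k + 1 : ℕ) : ℂ) * (B * f 0) - A * (r * f 0)‖ := by
        rw [eval_zero_iterate_derivative_mul_X_sub_C]; push_cast; congr 1; ring
    _ ≤ (k + 1 : ℕ) * ‖B * (w 0 * f 0)‖ + ‖A * (w 0 * f 0)‖ := by
        refine (norm_sub_le _ _).trans (add_le_add ?_ hrf0)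
        rw [norm_mul, Complex.norm_natCast]
        gcongr
    _ ≤ (k + 1 : ℕ) * (M.descFactorial k * avg) + M.descFactorial (k + 1) * avg := by gcongr
    _ = (M + 1).descFactorial (k + 1) * avg := by
        rw [Nat.succ_descFactorial_succ_eq_add]; push_cast; ring

theorem norm_iterate_derivative_eval_zero_mul_le {m : ℕ} {p : ℂ[X]} (hp : p.natDegree ≤ m)
    {f : ℂ → ℂ} (hf : DiffContOnCl ℂ f (ball 0 1)) (l : ℕ) :
    ‖(derivative^[l] p).eval 0 * f 0‖ ≤
      m.descFactorial l * circleAverage (fun z ↦ ‖p.eval z * f z‖) 0 1 := by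
  induction m generalizing p f l with
  | zero =>
    rcases l with _ | k
    · simpa using norm_eval_zero_mul_le_circleAverage p hf
    · simp [iterate_derivative_eq_zero (hp.trans_lt k.succ_pos)]
  | succ M ih =>
    rcases l with _ | k
    · simpa using norm_eval_zero_mul_le_circleAverage p hf
    by_cases hp0 : p.natDegree = 0
    · rw [iterate_derivative_eq_zero (by omega), eval_zero, zero_mul, norm_zero]
      exact mul_nonneg (Nat.cast_nonneg _) (circleAverage_nonneg_of_nonneg fun _ _ ↦ norm_nonneg _)
    obtain ⟨r, hr⟩ := Complex.exists_root (f := p) (natDegree_pos_iff_degree_pos.mp (by omega))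
    have hq : (p /ₘ (X - C r)).natDegree ≤ M := by
      rw [natDegree_divByMonic _ (monic_X_sub_C r), natDegree_X_sub_C]; omega
    rw [← mul_divByMonic_eq_iff_isRoot.mpr hr, mul_comm (X - C r)]
    exact norm_iterate_derivative_mul_X_sub_C_eval_zero_mul_le (fun _ hg ↦ ih hq hg) r hf k

theorem derivative_at_zero_circle_estimate_general (m l : ℕ) (hlm : l ≤ m)
    (p : Polynomial ℂ) (hp : p.natDegree ≤ m) (f : ℂ → ℂ) (hf : Differentiable ℂ f) :
    ‖(Polynomial.derivative^[l] p).eval 0 * f 0‖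
      ≤ ((m.factorial : ℝ) / (m - l).factorial) *
        ((2 * Real.pi)⁻¹ * ∫ θ in (0 : ℝ)..2 * Real.pi,
          ‖p.eval (Complex.exp (θ * Complex.I)) *
            f (Complex.exp (θ * Complex.I))‖) := by
  have hfactorial : (m.factorial : ℝ) / (m - l).factorial = m.descFactorial l := by
    rw [← Nat.factorial_mul_descFactorial hlm, Nat.cast_mul,
      mul_div_cancel_left₀ _ (Nat.cast_ne_zero.mpr (Nat.factorial_ne_zero _))]
  simpa [hfactorial, circleAverage_def, circleMap] using
    norm_iterate_derivative_eval_zero_mul_le hp hf.diffContOnCl l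

theorem derivative_at_zero_circle_estimate (m l : ℕ) (hl : 1 ≤ l) (hlm : l ≤ m)
    (p : Polynomial ℂ) (hp : p.natDegree ≤ m) (f : ℂ → ℂ) (hf : Differentiable ℂ f) :
    ‖(Polynomial.derivative^[l] p).eval 0 * f 0‖
      ≤ ((m.factorial : ℝ) / (m - l).factorial) *
        ((2 * Real.pi)⁻¹ * ∫ θ in (0 : ℝ)..2 * Real.pi,
          ‖p.eval (Complex.exp (θ * Complex.I)) *
            f (Complex.exp (θ * Complex.I))‖) :=
  derivative_at_zero_circle_estimate_general m l hlm p hp f hf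
end

section
/- With δ(z) = c(1−|z|), 1/4 < r < 1 and 0 < c < min{(r−1/4)/4, 1/10}, the sets Q_δ(a) = {z : |P_a z − a| < δ, |P_a^⊥ z| < √δ} satisfy the engulfing property: there is an absolute constant C = 200 such that for every z ∈ Ω_r and every z' ∈ Q_{δ(z)}(z), one has Q_{δ(z)}(z) ⊂ Q_{C δ(z')}(z') and Q_{δ(z')}(z') ⊂ Q_{C δ(z)}(z). -/
/-!
Membership `w ∈ Q_δ(a)` says that the complex-tangential deviation `⟪a, w - a⟫` is of order
`δ ‖a‖` and that `‖w - a‖` is of order `√δ`. When the centre moves from `a` to `b`, both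
quantities obey a triangle inequality whose error term `‖b - a‖ ‖w - a‖` is again of order `δ`.
If `z' ∈ Q_δ(z)`, the radial part of `z' - z` is `O(δ)` and the orthogonal part changes `‖z'‖²`
by only `O(δ)`, so `1 - ‖z'‖` and `1 - ‖z‖` agree up to a factor `4`; hence `δ(z)` and `δ(z')` are
comparable and both inclusions follow with constants well below `200`.
-/

open MeasureTheory Metric

/-- The nonisotropic neighborhood `Q_δ(a)` of a point `a ∈ ℂⁿ`. -/
def Qnbhd {n : ℕ} (δ : ℝ) (a : EuclideanSpace ℂ (Fin n)) :
    Set (EuclideanSpace ℂ (Fin n)) :=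
  {z | ‖(Submodule.orthogonalProjectionOnto (Submodule.span ℂ {a}) z : EuclideanSpace ℂ (Fin n)) - a‖ < δ ∧
       ‖z - (Submodule.orthogonalProjectionOnto (Submodule.span ℂ {a}) z : EuclideanSpace ℂ (Fin n))‖ <
         Real.sqrt δ}

open scoped InnerProductSpace

section Projection

variable {𝕜 E : Type*} [RCLike 𝕜] [NormedAddCommGroup E] [InnerProductSpace 𝕜 E]

theorem norm_inner_sub_eq_norm_mul_norm_starProjection_sub (a w : E) :
    ‖⟪a, w - a⟫_𝕜‖ = ‖a‖ * ‖(𝕜 ∙ a).starProjection w - a‖ := by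
  rcases eq_or_ne a 0 with rfl | ha
  · simp
  have hP : (𝕜 ∙ a).starProjection w - a = (𝕜 ∙ a).starProjection (w - a) := by
    rw [map_sub, Submodule.starProjection_eq_self_iff.mpr (Submodule.mem_span_singleton_self a)]
  have ha' : ‖a‖ ≠ 0 := norm_ne_zero_iff.mpr ha
  rw [hP, Submodule.starProjection_singleton, norm_smul, norm_div, RCLike.norm_ofReal,
    abs_of_nonneg (by positivity)]
  field_simp

theorem Submodule.norm_sub_starProjection_le (K : Submodule 𝕜 E) [K.HasOrthogonalProjection]
    (w : E) {u : E} (hu : u ∈ K) : ‖w - K.starProjection w‖ ≤ ‖w - u‖ := by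
  rw [Submodule.starProjection_minimal]
  exact ciInf_le ⟨0, Set.forall_mem_range.mpr fun _ ↦ norm_nonneg _⟩ (⟨u, hu⟩ : K)

theorem Submodule.norm_sq_eq_norm_sq_starProjection_add_norm_sq_sub (K : Submodule 𝕜 E)
    [K.HasOrthogonalProjection] (w : E) :
    ‖w‖ ^ 2 = ‖K.starProjection w‖ ^ 2 + ‖w - K.starProjection w‖ ^ 2 := by
  rw [← K.starProjection_orthogonal_val]
  exact norm_sq_eq_add_norm_sq_starProjection w K

theorem norm_inner_sub_recenter_le (a b w : E) :
    ‖⟪b, w - b⟫_𝕜‖ ≤ ‖⟪a, w - a⟫_𝕜‖ + ‖b - a‖ * ‖w - a‖ + ‖⟪b, a - b⟫_𝕜‖ := by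
  have h : ⟪b, w - b⟫_𝕜 = ⟪a, w - a⟫_𝕜 + ⟪b - a, w - a⟫_𝕜 + ⟪b, a - b⟫_𝕜 := by
    simp only [inner_sub_left, inner_sub_right]
    ring
  rw [h]
  refine (norm_add₃_le).trans ?_
  gcongr
  exact norm_inner_le_norm _ _

theorem norm_inner_sub_swap_le (a b : E) :
    ‖⟪b, a - b⟫_𝕜‖ ≤ ‖⟪a, b - a⟫_𝕜‖ + ‖a - b‖ ^ 2 := by
  have h : ⟪b, a - b⟫_𝕜 = -⟪a, b - a⟫_𝕜 - ⟪a - b, a - b⟫_𝕜 := by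
    simp only [inner_sub_left, inner_sub_right]
    ring
  rw [h, sq]
  refine (norm_sub_le _ _).trans ?_
  rw [norm_neg]
  gcongr
  exact norm_inner_le_norm _ _

end Projection

section Qnbhd

variable {n : ℕ} {δ : ℝ} {a w : EuclideanSpace ℂ (Fin n)}

theorem mem_Qnbhd_iff : w ∈ Qnbhd δ a ↔
    ‖(ℂ ∙ a).starProjection w - a‖ < δ ∧ ‖w - (ℂ ∙ a).starProjection w‖ < √δ :=
  Iff.rfl

theorem nonneg_of_mem_Qnbhd (hw : w ∈ Qnbhd δ a) : 0 ≤ δ :=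
  (norm_nonneg _).trans (mem_Qnbhd_iff.mp hw).1.le

theorem norm_inner_sub_le_of_mem_Qnbhd (hw : w ∈ Qnbhd δ a) : ‖⟪a, w - a⟫_ℂ‖ ≤ δ * ‖a‖ := by
  rw [norm_inner_sub_eq_norm_mul_norm_starProjection_sub, mul_comm]
  exact mul_le_mul_of_nonneg_right (mem_Qnbhd_iff.mp hw).1.le (norm_nonneg a)

theorem norm_sub_lt_of_mem_Qnbhd (hw : w ∈ Qnbhd δ a) : ‖w - a‖ < δ + √δ := by
  obtain ⟨h₁, h₂⟩ := mem_Qnbhd_iff.mp hw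
  calc ‖w - a‖ ≤ ‖w - (ℂ ∙ a).starProjection w‖ + ‖(ℂ ∙ a).starProjection w - a‖ :=
        norm_sub_le_norm_sub_add_norm_sub _ _ _
    _ < δ + √δ := by linarith

theorem sub_lt_norm_of_mem_Qnbhd (hw : w ∈ Qnbhd δ a) : ‖a‖ - δ < ‖w‖ := by
  linarith [(mem_Qnbhd_iff.mp hw).1, norm_le_norm_add_norm_sub ((ℂ ∙ a).starProjection w) a,
    Submodule.norm_starProjection_apply_le (ℂ ∙ a) w]

theorem norm_sq_lt_of_mem_Qnbhd (hw : w ∈ Qnbhd δ a) : ‖w‖ ^ 2 < (‖a‖ + δ) ^ 2 + δ := by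
  obtain ⟨h₁, h₂⟩ := mem_Qnbhd_iff.mp hw
  have hP : ‖(ℂ ∙ a).starProjection w‖ < ‖a‖ + δ := by
    linarith [norm_le_norm_add_norm_sub' ((ℂ ∙ a).starProjection w) a]
  calc ‖w‖ ^ 2 = ‖(ℂ ∙ a).starProjection w‖ ^ 2 + ‖w - (ℂ ∙ a).starProjection w‖ ^ 2 :=
        (ℂ ∙ a).norm_sq_eq_norm_sq_starProjection_add_norm_sq_sub w
    _ < (‖a‖ + δ) ^ 2 + √δ ^ 2 := by gcongr
    _ = (‖a‖ + δ) ^ 2 + δ := by rw [Real.sq_sqrt (nonneg_of_mem_Qnbhd hw)]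

theorem mem_Qnbhd_of_norm_inner_sub_lt (h₁ : ‖⟪a, w - a⟫_ℂ‖ < δ * ‖a‖)
    (h₂ : ‖w - a‖ ^ 2 < δ) : w ∈ Qnbhd δ a := by
  refine mem_Qnbhd_iff.mpr ⟨?_, ?_⟩
  · rw [norm_inner_sub_eq_norm_mul_norm_starProjection_sub, mul_comm] at h₁
    exact lt_of_mul_lt_mul_right h₁ (norm_nonneg a)
  · refine ((ℂ ∙ a).norm_sub_starProjection_le w (Submodule.mem_span_singleton_self a)).trans_lt ?_
    exact Real.lt_sqrt_of_sq_lt h₂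

end Qnbhd

section Engulfing

variable {n : ℕ} {a b : EuclideanSpace ℂ (Fin n)}

theorem Qnbhd_subset_Qnbhd {δ D σ β : ℝ} (hσ : ‖b - a‖ ≤ σ) (hβ : ‖⟪b, a - b⟫_ℂ‖ ≤ β)
    (h₁ : δ * ‖a‖ + σ * (δ + √δ) + β < D * ‖b‖) (h₂ : (δ + √δ + σ) ^ 2 ≤ D) :
    Qnbhd δ a ⊆ Qnbhd D b := by
  intro w hw
  have hwa := norm_sub_lt_of_mem_Qnbhd hw
  refine mem_Qnbhd_of_norm_inner_sub_lt ?_ ?_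
  · calc ‖⟪b, w - b⟫_ℂ‖ ≤ ‖⟪a, w - a⟫_ℂ‖ + ‖b - a‖ * ‖w - a‖ + ‖⟪b, a - b⟫_ℂ‖ :=
          norm_inner_sub_recenter_le a b w
      _ ≤ δ * ‖a‖ + σ * (δ + √δ) + β := by
          gcongr
          · exact norm_inner_sub_le_of_mem_Qnbhd hw
          · exact (norm_nonneg _).trans hσ
      _ < D * ‖b‖ := h₁
  · have hwb : ‖w - b‖ < δ + √δ + σ := by
      calc ‖w - b‖ ≤ ‖w - a‖ + ‖b - a‖ := by
            simpa only [norm_sub_rev b a] using norm_sub_le_norm_sub_add_norm_sub w a b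
        _ < δ + √δ + σ := by linarith
    calc ‖w - b‖ ^ 2 < (δ + √δ + σ) ^ 2 := by gcongr
      _ ≤ D := h₂

theorem one_sub_norm_comparable_of_mem_Qnbhd {c : ℝ} (hc : 0 < c) (hc' : c ≤ 1 / 10)
    (ha : ‖a‖ < 1) (hb : b ∈ Qnbhd (c * (1 - ‖a‖)) a) :
    1 - ‖a‖ ≤ 4 * (1 - ‖b‖) ∧ 1 - ‖b‖ ≤ 4 * (1 - ‖a‖) := by
  have hlow := sub_lt_norm_of_mem_Qnbhd hb
  have hup := norm_sq_lt_of_mem_Qnbhd hb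
  set t := 1 - ‖a‖
  have ht : 0 < t := sub_pos.mpr ha
  have hδ : c * t ≤ t / 10 := by linarith [mul_le_mul_of_nonneg_right hc' ht.le]
  have hδ₀ : 0 ≤ c * t := by positivity
  have ht₁ : t ≤ 1 := by linarith [norm_nonneg a]
  have hsq : ‖b‖ ^ 2 < (1 - t / 4) ^ 2 :=
    calc ‖b‖ ^ 2 < (‖a‖ + c * t) ^ 2 + c * t := hup
      _ ≤ (1 - 9 / 10 * t) ^ 2 + t / 10 := by gcongr; linarith
      _ ≤ (1 - t / 4) ^ 2 := by nlinarith
  have hb₁ := lt_of_pow_lt_pow_left₀ 2 (by linarith) hsq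
  constructor <;> linarith

theorem norm_sub_le_and_norm_inner_sub_le_of_mem_Qnbhd {δ : ℝ} (hb : b ∈ Qnbhd δ a)
    (ha : ‖a‖ ≤ 1) (hδ : δ ≤ 1) : ‖b - a‖ ≤ 2 * √δ ∧ ‖⟪a, b - a⟫_ℂ‖ ≤ δ := by
  refine ⟨?_, ?_⟩
  · linarith [norm_sub_lt_of_mem_Qnbhd hb, Real.le_sqrt_self_iff.mpr hδ]
  · exact (norm_inner_sub_le_of_mem_Qnbhd hb).trans
      (mul_le_of_le_one_right (nonneg_of_mem_Qnbhd hb) ha)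

theorem Qnbhd_subset_Qnbhd_at_mem {δ D : ℝ} (hb : b ∈ Qnbhd δ a) (ha : ‖a‖ ≤ 1) (hδ : δ ≤ 1)
    (h₁ : 10 * δ < D * ‖b‖) (h₂ : 16 * δ ≤ D) : Qnbhd δ a ⊆ Qnbhd D b := by
  obtain ⟨hba, hinner⟩ := norm_sub_le_and_norm_inner_sub_le_of_mem_Qnbhd hb ha hδ
  have hδ₀ : 0 ≤ δ := nonneg_of_mem_Qnbhd hb
  have hs := Real.sq_sqrt hδ₀
  have hδs : δ ≤ √δ := Real.le_sqrt_self_iff.mpr hδ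
  refine Qnbhd_subset_Qnbhd hba (β := 5 * δ) ?_ ?_ ?_
  · calc ‖⟪b, a - b⟫_ℂ‖ ≤ ‖⟪a, b - a⟫_ℂ‖ + ‖a - b‖ ^ 2 := norm_inner_sub_swap_le a b
      _ ≤ δ + (2 * √δ) ^ 2 := by rw [norm_sub_rev]; gcongr
      _ = 5 * δ := by linarith
  · calc δ * ‖a‖ + 2 * √δ * (δ + √δ) + 5 * δ ≤ δ + 2 * √δ * (2 * √δ) + 5 * δ := by
          gcongr
          · exact mul_le_of_le_one_right hδ₀ ha
          · linarith
      _ = 10 * δ := by linarith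
      _ < D * ‖b‖ := h₁
  · calc (δ + √δ + 2 * √δ) ^ 2 ≤ (4 * √δ) ^ 2 := by gcongr; linarith
      _ ≤ D := by linarith

theorem Qnbhd_at_mem_subset_Qnbhd {δ δ' D : ℝ} (hb : b ∈ Qnbhd δ a) (ha : ‖a‖ ≤ 1)
    (hb₁ : ‖b‖ ≤ 1) (hδ : δ ≤ 1 / 4) (hδ'₀ : 0 ≤ δ') (hδ' : δ' ≤ 4 * δ)
    (h₁ : 13 * δ < D * ‖a‖) (h₂ : 36 * δ ≤ D) : Qnbhd δ' b ⊆ Qnbhd D a := by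
  obtain ⟨hba, hinner⟩ := norm_sub_le_and_norm_inner_sub_le_of_mem_Qnbhd hb ha (by linarith)
  have hs := Real.sq_sqrt (nonneg_of_mem_Qnbhd hb)
  have hδs' : δ' ≤ √δ' := Real.le_sqrt_self_iff.mpr (by linarith)
  have hss' : √δ' ≤ 2 * √δ := (Real.sqrt_le_left (by positivity)).mpr (by linarith)
  refine Qnbhd_subset_Qnbhd (σ := 2 * √δ) (by rwa [norm_sub_rev]) hinner ?_ ?_
  · have hδ'b : δ' * ‖b‖ ≤ 4 * δ := by linarith [mul_le_of_le_one_right hδ'₀ hb₁]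
    have hsum : δ' + √δ' ≤ 4 * √δ := by linarith
    calc δ' * ‖b‖ + 2 * √δ * (δ' + √δ') + δ ≤ 4 * δ + 2 * √δ * (4 * √δ) + δ := by gcongr
      _ = 13 * δ := by linarith
      _ < D * ‖a‖ := h₁
  · calc (δ' + √δ' + 2 * √δ) ^ 2 ≤ (6 * √δ) ^ 2 := by gcongr; linarith
      _ ≤ D := by linarith

end Engulfing

theorem Qnbhd_engulfing_general (n : ℕ) (r c : ℝ) (hr : 1 / 4 < r)
    (hc : 0 < c) (hc1 : c < min ((r - 1 / 4) / 4) (1 / 10))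
    (z z' : EuclideanSpace ℂ (Fin n))
    (hz : r < ‖z‖) (hz1 : ‖z‖ < 1)
    (hz' : z' ∈ Qnbhd (c * (1 - ‖z‖)) z) :
    Qnbhd (c * (1 - ‖z‖)) z ⊆ Qnbhd (200 * (c * (1 - ‖z'‖))) z' ∧
    Qnbhd (c * (1 - ‖z'‖)) z' ⊆ Qnbhd (200 * (c * (1 - ‖z‖))) z := by
  obtain ⟨hcr, hc10⟩ := lt_min_iff.mp hc1
  obtain ⟨ht, ht'⟩ := one_sub_norm_comparable_of_mem_Qnbhd hc hc10.le hz1 hz'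
  have hδc : c * (1 - ‖z‖) < c := mul_lt_of_lt_one_right hc (by linarith)
  have hz'_gt : 1 / 4 < ‖z'‖ := by linarith [sub_lt_norm_of_mem_Qnbhd hz']
  have hz'_lt : ‖z'‖ < 1 := by linarith
  have hδδ' := mul_le_mul_of_nonneg_left ht hc.le
  have hδ'δ := mul_le_mul_of_nonneg_left ht' hc.le
  rw [mul_left_comm] at hδδ' hδ'δ
  have hδ' : 0 < c * (1 - ‖z'‖) := mul_pos hc (by linarith)
  constructor
  · refine Qnbhd_subset_Qnbhd_at_mem hz' hz1.le (by linarith) ?_ (by linarith)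
    linarith [mul_lt_mul_of_pos_left hz'_gt hδ']
  · refine Qnbhd_at_mem_subset_Qnbhd hz' hz1.le hz'_lt.le (by linarith) hδ'.le hδ'δ ?_ (by linarith)
    linarith [mul_lt_mul_of_pos_left (hr.trans hz) (mul_pos hc (sub_pos.mpr hz1))]

theorem Qnbhd_engulfing (n : ℕ) (r c : ℝ) (hr : 1 / 4 < r) (hr1 : r < 1)
    (hc : 0 < c) (hc1 : c < min ((r - 1 / 4) / 4) (1 / 10))
    (z z' : EuclideanSpace ℂ (Fin n))
    (hz : r < ‖z‖) (hz1 : ‖z‖ < 1)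
    (hz' : z' ∈ Qnbhd (c * (1 - ‖z‖)) z) :
    Qnbhd (c * (1 - ‖z‖)) z ⊆ Qnbhd (200 * (c * (1 - ‖z'‖))) z' ∧
    Qnbhd (c * (1 - ‖z'‖)) z' ⊆ Qnbhd (200 * (c * (1 - ‖z‖))) z :=
  Qnbhd_engulfing_general n r c hr hc hc1 z z' hz hz1 hz'
end
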